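/- arXiv:1805.07626 — 7 statements merged into one kernel-verified Lean document; each statement's English description precedes it below -/
import Mathlib

section
/- Let s > 0 and bounds 0 < u̲ ≤ ū, 0 ≤ v̲ ≤ v̄ satisfy ū·v̲ ≤ s ≤ u̲·v̄. Then the convex hull of the planar set {(u,v) ∈ ℝ² : u·v ≤ s, u̲ ≤ u ≤ ū, v̲ ≤ v ≤ v̄} equals the trapezoid {(u,v) ∈ ℝ² : s·u + u̲·ū·v ≤ s·(u̲ + ū), u̲ ≤ u ≤ ū, v̲ ≤ v ≤ v̄}. -/
/-!
Every point of the box below the hyperbola satisfies the chord inequality: for `u ∈ [u̲, ū]`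
and `u v ≤ s`, multiplying the chord inequality by `u > 0` reduces it to `s (u - u̲) (u - ū) ≤ 0`.
Conversely, a point `(u, v)` of the trapezoid lies on the vertical segment from `(u, v̲)` to the
point of the chord above `u`; the former lies in the region since `u v̲ ≤ ū v̲ ≤ s`, the latter on
the segment between the hyperbola points `(u̲, s / u̲)` and `(ū, s / ū)`, which lie in the box
because `ū v̲ ≤ s ≤ u̲ v̄`.
-/

open Set

lemma le_chord_of_mul_le {s a b u v : ℝ} (hs : 0 ≤ s) (ha : 0 < a) (hau : a ≤ u) (hub : u ≤ b)
    (huv : u * v ≤ s) : s * u + a * b * v ≤ s * (a + b) := by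
  have hu : 0 < u := ha.trans_le hau
  refine le_of_mul_le_mul_left ?_ hu
  nlinarith [mul_nonneg hs (mul_nonneg (sub_nonneg.2 hau) (sub_nonneg.2 hub)),
    mul_le_mul_of_nonneg_left huv (mul_pos ha (hu.trans_le hub)).le]

lemma convex_halfPlane_inter_box (α β γ a b c d : ℝ) :
    Convex ℝ {p : ℝ × ℝ | α * p.1 + β * p.2 ≤ γ ∧ a ≤ p.1 ∧ p.1 ≤ b ∧ c ≤ p.2 ∧ p.2 ≤ d} := by
  have hfst : IsLinearMap ℝ (Prod.fst : ℝ × ℝ → ℝ) := (LinearMap.fst ℝ ℝ ℝ).isLinear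
  have hsnd : IsLinearMap ℝ (Prod.snd : ℝ × ℝ → ℝ) := (LinearMap.snd ℝ ℝ ℝ).isLinear
  have hlin : IsLinearMap ℝ fun p : ℝ × ℝ => α * p.1 + β * p.2 :=
    ⟨fun p q => by simp only [Prod.fst_add, Prod.snd_add]; ring,
      fun r p => by simp only [Prod.smul_fst, Prod.smul_snd, smul_eq_mul]; ring⟩
  exact (convex_halfSpace_le hlin γ).inter <| (convex_halfSpace_ge hfst a).inter <|
    (convex_halfSpace_le hfst b).inter <| (convex_halfSpace_ge hsnd c).inter <|
      convex_halfSpace_le hsnd d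

lemma mem_segment_of_mem_line {α β r : ℝ} {p q z : ℝ × ℝ} (hβ : β ≠ 0)
    (hp : α * p.1 + β * p.2 = r) (hq : α * q.1 + β * q.2 = r) (hz : α * z.1 + β * z.2 = r)
    (hz₁ : z.1 ∈ Icc p.1 q.1) : z ∈ segment ℝ p q := by
  rw [← segment_eq_Icc (hz₁.1.trans hz₁.2)] at hz₁
  obtain ⟨θ, η, hθ, hη, hθη, hx⟩ := hz₁
  refine ⟨θ, η, hθ, hη, hθη, Prod.ext (by simpa using hx) ?_⟩
  refine mul_left_cancel₀ hβ ?_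
  simp only [Prod.snd_add, Prod.smul_snd, smul_eq_mul] at hx ⊢
  linear_combination θ * hp + η * hq - hz - α * hx + r * hθη

lemma Prod.mk_mem_segment_mk_right {E : Type*} [AddCommGroup E] [Module ℝ E] (x : E)
    {y₁ y₂ y : ℝ} (hy : y ∈ Icc y₁ y₂) : (x, y) ∈ segment ℝ (x, y₁) (x, y₂) := by
  rw [← Prod.image_mk_segment_right, segment_eq_Icc (hy.1.trans hy.2)]
  exact mem_image_of_mem _ hy

theorem hyperbola_box_convexHull_general
    (s ul uu vl vu : ℝ) (hul : 0 < ul) (hu : ul ≤ uu)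
    (hvl : 0 ≤ vl) (hv : vl ≤ vu) (h1 : uu * vl ≤ s) (h2 : s ≤ ul * vu) :
    convexHull ℝ
      {p : ℝ × ℝ | p.1 * p.2 ≤ s ∧ ul ≤ p.1 ∧ p.1 ≤ uu ∧ vl ≤ p.2 ∧ p.2 ≤ vu} =
      {p : ℝ × ℝ | s * p.1 + ul * uu * p.2 ≤ s * (ul + uu) ∧
        ul ≤ p.1 ∧ p.1 ≤ uu ∧ vl ≤ p.2 ∧ p.2 ≤ vu} := by
  have huu : 0 < uu := hul.trans_le hu
  have hs : 0 ≤ s := (mul_nonneg huu.le hvl).trans h1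
  set S := {p : ℝ × ℝ | p.1 * p.2 ≤ s ∧ ul ≤ p.1 ∧ p.1 ≤ uu ∧ vl ≤ p.2 ∧ p.2 ≤ vu}
  refine (convexHull_min ?_ (convex_halfPlane_inter_box _ _ _ _ _ _ _)).antisymm ?_
  · exact fun p hp => ⟨le_chord_of_mul_le hs hul hp.2.1 hp.2.2.1 hp.1, hp.2⟩
  rintro ⟨u, v⟩ ⟨hchord, hulu, huuu, hvlv, -⟩
  have hA : (ul, s / ul) ∈ S := ⟨by simp [mul_div_cancel₀ _ hul.ne'], le_rfl, hu,
    (le_div_iff₀ hul).2 (by nlinarith), (div_le_iff₀' hul).2 h2⟩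
  have hB : (uu, s / uu) ∈ S := ⟨by simp [mul_div_cancel₀ _ huu.ne'], hu, le_rfl,
    (le_div_iff₀' huu).2 h1, (div_le_iff₀' huu).2 (by nlinarith)⟩
  have hC : (u, vl) ∈ S := ⟨by nlinarith, hulu, huuu, le_rfl, hv⟩
  set w := s * (ul + uu - u) / (ul * uu)
  have hw : s * u + ul * uu * w = s * (ul + uu) := by
    simp only [w]; field_simp; ring
  have hwS : (u, w) ∈ convexHull ℝ S := segment_subset_convexHull hA hB <|
    mem_segment_of_mem_line (mul_pos hul huu).ne' (by field_simp) (by field_simp; ring) hw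
      ⟨hulu, huuu⟩
  have hvw : v ≤ w := le_of_mul_le_mul_left (by dsimp only at hchord; linarith) (mul_pos hul huu)
  exact (convex_convexHull ℝ S).segment_subset (subset_convexHull ℝ S hC) hwS
    (Prod.mk_mem_segment_mk_right u ⟨hvlv, hvw⟩)

/-- The convex hull of the region below the hyperbola u·v = s inside a box equals
the trapezoid cut out by the chord s·u + u̲·ū·v ≤ s·(u̲ + ū) together with the box. -/
theorem hyperbola_box_convexHull
    (s ul uu vl vu : ℝ) (hs : 0 < s) (hul : 0 < ul) (hu : ul ≤ uu)
    (hvl : 0 ≤ vl) (hv : vl ≤ vu) (h1 : uu * vl ≤ s) (h2 : s ≤ ul * vu) :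
    convexHull ℝ
      {p : ℝ × ℝ | p.1 * p.2 ≤ s ∧ ul ≤ p.1 ∧ p.1 ≤ uu ∧ vl ≤ p.2 ∧ p.2 ≤ vu} =
      {p : ℝ × ℝ | s * p.1 + ul * uu * p.2 ≤ s * (ul + uu) ∧
        ul ≤ p.1 ∧ p.1 ≤ uu ∧ vl ≤ p.2 ∧ p.2 ≤ vu} :=
  hyperbola_box_convexHull_general s ul uu vl vu hul hu hvl hv h1 h2
end

section
/- Let s > 0 and bounds 0 < u̲ ≤ u ≤ ū, 0 ≤ v̲ ≤ v ≤ v̄ with u·v ≤ s and ū·v̲ ≤ s ≤ u̲·v̄. Then s·u + u̲·ū·v ≤ s·(u̲ + ū). -/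
/-! Multiplying the cut by `u > 0` and using `u * v ≤ s` reduces it to
`s * (u * u + u̲ * ū) ≤ s * (u̲ + ū) * u`, i.e. to `(u - u̲) * (ū - u) ≥ 0`:
the chord through the points of the hyperbola `u * v = s` at `u = u̲` and `u = ū` lies above it. -/

theorem mul_self_add_mul_le_add_mul {α : Type*} [CommRing α] [LinearOrder α]
    [IsStrictOrderedRing α] {a b x : α} (hax : a ≤ x) (hxb : x ≤ b) :
    x * x + a * b ≤ (a + b) * x := by
  nlinarith [mul_nonneg (sub_nonneg.2 hax) (sub_nonneg.2 hxb)]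

theorem linear_cut_case1_general
    (s ul uu u v : ℝ) (hs : 0 < s)
    (h0 : 0 < ul) (hul : ul ≤ u) (huu : u ≤ uu)
    (huv : u * v ≤ s) :
    s * u + ul * uu * v ≤ s * (ul + uu) := by
  have hu : 0 < u := h0.trans_le hul
  have hulu : 0 ≤ ul * uu := mul_nonneg h0.le (h0.trans_le (hul.trans huu)).le
  refine le_of_mul_le_mul_left ?_ hu
  calc u * (s * u + ul * uu * v) = s * (u * u) + ul * uu * (u * v) := by ring
    _ ≤ s * (u * u) + ul * uu * s := by gcongr
    _ = s * (u * u + ul * uu) := by ring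
    _ ≤ s * ((ul + uu) * u) := by gcongr; exact mul_self_add_mul_le_add_mul hul huu
    _ = u * (s * (ul + uu)) := by ring

/-- Validity of the chord cut s·u + u̲·ū·v ≤ s·(u̲ + ū) for points in the box
[u̲,ū]×[v̲,v̄] below the hyperbola u·v ≤ s, when ū·v̲ ≤ s ≤ u̲·v̄. -/
theorem linear_cut_case1
    (s ul uu vl vu u v : ℝ) (hs : 0 < s)
    (h0 : 0 < ul) (hul : ul ≤ u) (huu : u ≤ uu)
    (h0v : 0 ≤ vl) (hvl : vl ≤ v) (hvu : v ≤ vu)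
    (huv : u * v ≤ s) (h1 : uu * vl ≤ s) (h2 : s ≤ ul * vu) :
    s * u + ul * uu * v ≤ s * (ul + uu) :=
  linear_cut_case1_general s ul uu u v hs h0 hul huu huv
end

section
/- Let R > 0 and f̄ > 0. The convex hull of the planar set {(f,y) ∈ ℝ² : 0 ≤ f ≤ f̄, y ≤ R·f²} equals the set {(f,y) ∈ ℝ² : 0 ≤ f ≤ f̄, y ≤ R·f̄·f}. -/
/-!
Since `R f² ≤ R f̄ f` on `[0, f̄]`, the region under the parabola lies in the region under the
chord, which is convex as an intersection of half-planes. Conversely, a point `(f, y)` under the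
chord is the chord point `(f, R f̄ f)` moved down by `d = y - R f̄ f ≤ 0`, so it lies on the
segment from `(0, d)` to `(f̄, R f̄² + d)`, and both endpoints lie under the parabola.
-/

lemma convex_setOf_le_mul_fst (k a b : ℝ) :
    Convex ℝ {p : ℝ × ℝ | a ≤ p.1 ∧ p.1 ≤ b ∧ p.2 ≤ k * p.1} := by
  have hfst : IsLinearMap ℝ (Prod.fst : ℝ × ℝ → ℝ) := (LinearMap.fst ℝ ℝ ℝ).isLinear
  have hchord : IsLinearMap ℝ fun p : ℝ × ℝ => p.2 - k * p.1 :=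
    (LinearMap.snd ℝ ℝ ℝ - k • LinearMap.fst ℝ ℝ ℝ).isLinear
  have hset : {p : ℝ × ℝ | a ≤ p.1 ∧ p.1 ≤ b ∧ p.2 ≤ k * p.1} =
      {p | a ≤ p.1} ∩ ({p | p.1 ≤ b} ∩ {p | p.2 - k * p.1 ≤ 0}) := by
    ext p
    simp
  rw [hset]
  exact (convex_halfSpace_ge hfst a).inter
    ((convex_halfSpace_le hfst b).inter (convex_halfSpace_le hchord 0))

lemma mk_mul_mem_segment {k a b x : ℝ} (hx : x ∈ Set.Icc a b) :
    ((x, k * x) : ℝ × ℝ) ∈ segment ℝ (a, k * a) (b, k * b) := by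
  let L : ℝ →ₗ[ℝ] ℝ × ℝ := LinearMap.id.prod (k • LinearMap.id)
  have hmem : L x ∈ L.toAffineMap '' Set.Icc a b := ⟨x, hx, rfl⟩
  rwa [← segment_eq_Icc (hx.1.trans hx.2), image_segment] at hmem

lemma setOf_le_chord_subset_convexHull (R fb : ℝ) :
    {p : ℝ × ℝ | 0 ≤ p.1 ∧ p.1 ≤ fb ∧ p.2 ≤ R * fb * p.1} ⊆
      convexHull ℝ {p : ℝ × ℝ | 0 ≤ p.1 ∧ p.1 ≤ fb ∧ p.2 ≤ R * p.1 ^ 2} := by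
  rintro ⟨f, y⟩ ⟨hf0, hffb, hy⟩
  set d := y - R * fb * f
  have hd : d ≤ 0 := sub_nonpos.2 hy
  have hseg : (f, y) ∈ segment ℝ ((0 : ℝ), d) (fb, d + R * fb * fb) := by
    have hchord := mk_mul_mem_segment (k := R * fb) ⟨hf0, hffb⟩
    convert (mem_segment_translate ℝ ((0 : ℝ), d)).2 hchord using 1 <;> simp [d]
  have hfb : 0 ≤ fb := hf0.trans hffb
  refine segment_subset_convexHull ?_ ?_ hseg
  · exact ⟨le_rfl, hfb, by simpa using hd⟩
  · exact ⟨hfb, le_rfl, by linarith⟩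

theorem parabola_convexHull_general (R fb : ℝ) (hR : 0 < R) :
    convexHull ℝ
      {p : ℝ × ℝ | 0 ≤ p.1 ∧ p.1 ≤ fb ∧ p.2 ≤ R * p.1 ^ 2} =
      {p : ℝ × ℝ | 0 ≤ p.1 ∧ p.1 ≤ fb ∧ p.2 ≤ R * fb * p.1} := by
  refine (convexHull_min ?_ (convex_setOf_le_mul_fst _ _ _)).antisymm
    (setOf_le_chord_subset_convexHull R fb)
  rintro ⟨f, y⟩ ⟨hf0, hffb, hy⟩
  refine ⟨hf0, hffb, hy.trans ?_⟩
  calc R * f ^ 2 = R * f * f := by ring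
    _ ≤ R * fb * f := by gcongr

/-- The convex hull of the reverse-parabola region {(f,y) : 0 ≤ f ≤ f̄, y ≤ R·f²}
equals the region below the chord {(f,y) : 0 ≤ f ≤ f̄, y ≤ R·f̄·f}. -/
theorem parabola_convexHull (R fb : ℝ) (hR : 0 < R) (hfb : 0 < fb) :
    convexHull ℝ
      {p : ℝ × ℝ | 0 ≤ p.1 ∧ p.1 ≤ fb ∧ p.2 ≤ R * p.1 ^ 2} =
      {p : ℝ × ℝ | 0 ≤ p.1 ∧ p.1 ≤ fb ∧ p.2 ≤ R * fb * p.1} :=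
  parabola_convexHull_general R fb hR
end

section
/- Let a > 0, b ≥ 0, η > 0, and f̄ > 0. The convex hull of the planar curve segment {(f,p) ∈ ℝ² : 0 ≤ f ≤ f̄, η·p = a·f² + b·f} equals the region {(f,p) ∈ ℝ² : 0 ≤ f ≤ f̄, a·f² + b·f ≤ η·p ≤ (a·f̄ + b)·f}. -/
/-!
The curve is the graph of the convex function `g f = (a f² + b f) / η` over `[0, f̄]`. For any
convex `g` on `[x₀, x₁]`, the region between the graph and the chord through its endpoints is
convex (an epigraph cut by a half-plane) and contains the graph; conversely each of its points
lies on a vertical segment from `(x, g x)` to the chord point `(x, c)`, and the chord point is a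
convex combination of the two endpoints of the graph.
-/

open Set

section
variable {𝕜 : Type*} [Field 𝕜] [LinearOrder 𝕜] [IsStrictOrderedRing 𝕜] {g : 𝕜 → 𝕜} {x₀ x₁ : 𝕜}

/-- The region between the graph of `g` over `[x₀, x₁]` and its chord, with the chord inequality
cleared of the denominator `x₁ - x₀`. -/
def chordRegion (g : 𝕜 → 𝕜) (x₀ x₁ : 𝕜) : Set (𝕜 × 𝕜) :=
  {q | q.1 ∈ Icc x₀ x₁ ∧ g q.1 ≤ q.2 ∧
    (x₁ - x₀) * q.2 ≤ (x₁ - q.1) * g x₀ + (q.1 - x₀) * g x₁}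

theorem ConvexOn.sub_mul_le_chord (hg : ConvexOn 𝕜 (Icc x₀ x₁) g) {x : 𝕜} (hx : x ∈ Icc x₀ x₁) :
    (x₁ - x₀) * g x ≤ (x₁ - x) * g x₀ + (x - x₀) * g x₁ := by
  rcases hx.1.eq_or_lt with rfl | hx₀
  · linarith
  rcases hx.2.eq_or_lt with rfl | hx₁
  · linarith
  exact hg.secant_mono_aux1 (left_mem_Icc.2 (hx₀.trans hx₁).le)
    (right_mem_Icc.2 (hx₀.trans hx₁).le) hx₀ hx₁

theorem convex_chordRegion (hg : ConvexOn 𝕜 (Icc x₀ x₁) g) : Convex 𝕜 (chordRegion g x₀ x₁) := by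
  have hchord :
      Convex 𝕜 {q : 𝕜 × 𝕜 | (x₁ - x₀) * q.2 ≤ (x₁ - q.1) * g x₀ + (q.1 - x₀) * g x₁} := by
    intro p hp q hq s t hs ht hst
    simp only [mem_ofPred_eq, Prod.fst_add, Prod.snd_add, Prod.smul_fst, Prod.smul_snd,
      smul_eq_mul] at hp hq ⊢
    obtain rfl : t = 1 - s := by linear_combination hst
    nlinarith [mul_le_mul_of_nonneg_left hp hs, mul_le_mul_of_nonneg_left hq ht]
  convert hg.convex_epigraph.inter hchord using 1
  ext q
  simp only [chordRegion, mem_inter_iff, mem_ofPred_eq, and_assoc]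

theorem ConvexOn.convexHull_graphOn_Icc (hg : ConvexOn 𝕜 (Icc x₀ x₁) g) (h : x₀ < x₁) :
    convexHull 𝕜 ((Icc x₀ x₁).graphOn g) = chordRegion g x₀ x₁ := by
  refine (convexHull_min ?_ (convex_chordRegion hg)).antisymm ?_
  · rintro _ ⟨x, hx, rfl⟩
    exact ⟨hx, le_rfl, hg.sub_mul_le_chord hx⟩
  rintro ⟨x, y⟩ ⟨hx, hlow, hhigh⟩
  have hd : 0 < x₁ - x₀ := sub_pos.2 h
  have hgraph : ∀ x ∈ Icc x₀ x₁, (x, g x) ∈ convexHull 𝕜 ((Icc x₀ x₁).graphOn g) :=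
    fun x hx ↦ subset_convexHull 𝕜 _ (mem_image_of_mem _ hx)
  set c := ((x₁ - x) * g x₀ + (x - x₀) * g x₁) / (x₁ - x₀) with hc
  have hchord : (x, c) ∈ convexHull 𝕜 ((Icc x₀ x₁).graphOn g) := by
    refine (convex_convexHull 𝕜 _).segment_subset (hgraph x₀ (left_mem_Icc.2 h.le))
      (hgraph x₁ (right_mem_Icc.2 h.le))
      ⟨(x₁ - x) / (x₁ - x₀), (x - x₀) / (x₁ - x₀), div_nonneg (sub_nonneg.2 hx.2) hd.le,
        div_nonneg (sub_nonneg.2 hx.1) hd.le, by field, ?_⟩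
    ext <;> simp only [Prod.smul_fst, Prod.smul_snd, Prod.fst_add, Prod.snd_add, smul_eq_mul, hc]
      <;> field
  have hy : y ∈ Icc (g x) c := ⟨hlow, by rw [hc, le_div_iff₀ hd]; linarith⟩
  refine (convex_convexHull 𝕜 _).segment_subset (hgraph x hx) hchord ?_
  rw [← Prod.image_mk_segment_right, segment_eq_Icc (hlow.trans hy.2)]
  exact mem_image_of_mem _ hy

end

theorem convexOn_quadratic_div {a η : ℝ} (b : ℝ) (ha : 0 ≤ a) (hη : 0 ≤ η) :
    ConvexOn ℝ univ fun f ↦ (a * f ^ 2 + b * f) / η := by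
  refine (((even_two.convexOn_pow.smul ha).add
    ((LinearMap.mul ℝ ℝ b).convexOn convex_univ)).smul (inv_nonneg.2 hη)).congr fun x _ ↦ ?_
  simp [div_eq_inv_mul]

theorem pump_curve_convexHull_general (a b eta fb : ℝ) (ha : 0 < a)
    (heta : 0 < eta) (hfb : 0 < fb) :
    convexHull ℝ
      {q : ℝ × ℝ | 0 ≤ q.1 ∧ q.1 ≤ fb ∧ eta * q.2 = a * q.1 ^ 2 + b * q.1} =
      {q : ℝ × ℝ | 0 ≤ q.1 ∧ q.1 ≤ fb ∧
        a * q.1 ^ 2 + b * q.1 ≤ eta * q.2 ∧ eta * q.2 ≤ (a * fb + b) * q.1} := by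
  set g : ℝ → ℝ := fun f ↦ (a * f ^ 2 + b * f) / eta
  have hg : ConvexOn ℝ (Icc 0 fb) g :=
    (convexOn_quadratic_div b ha.le heta.le).subset (subset_univ _) (convex_Icc 0 fb)
  have hgraph : {q : ℝ × ℝ | 0 ≤ q.1 ∧ q.1 ≤ fb ∧ eta * q.2 = a * q.1 ^ 2 + b * q.1} =
      (Icc 0 fb).graphOn g := by
    ext q
    simp only [mem_ofPred_eq, mem_graphOn, mem_Icc, and_assoc, g, div_eq_iff heta.ne',
      mul_comm q.2]
    rw [eq_comm (a := eta * q.2)]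
  have hregion : {q : ℝ × ℝ | 0 ≤ q.1 ∧ q.1 ≤ fb ∧
      a * q.1 ^ 2 + b * q.1 ≤ eta * q.2 ∧ eta * q.2 ≤ (a * fb + b) * q.1} =
      chordRegion g 0 fb := by
    ext q
    have hchord : (fb - 0) * q.2 ≤ (fb - q.1) * g 0 + (q.1 - 0) * g fb ↔
        eta * q.2 ≤ (a * fb + b) * q.1 := by
      have hrhs : (fb - q.1) * g 0 + (q.1 - 0) * g fb = fb * ((a * fb + b) * q.1 / eta) := by
        simp only [g]; ring
      rw [hrhs, sub_zero, mul_le_mul_iff_right₀ hfb, le_div_iff₀ heta, mul_comm]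
    simp only [chordRegion, mem_ofPred_eq, mem_Icc, and_assoc, hchord, g, div_le_iff₀ heta,
      mul_comm q.2]
  rw [hgraph, hregion, hg.convexHull_graphOn_Icc hfb]

/-- The convex hull of the pump power–flow curve {(f,p) : 0 ≤ f ≤ f̄, η·p = a·f² + b·f}
is the region between the parabola and its chord from (0,0) to (f̄, a·f̄² + b·f̄). -/
theorem pump_curve_convexHull (a b eta fb : ℝ) (ha : 0 < a) (hb : 0 ≤ b)
    (heta : 0 < eta) (hfb : 0 < fb) :
    convexHull ℝ
      {q : ℝ × ℝ | 0 ≤ q.1 ∧ q.1 ≤ fb ∧ eta * q.2 = a * q.1 ^ 2 + b * q.1} =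
      {q : ℝ × ℝ | 0 ≤ q.1 ∧ q.1 ≤ fb ∧
        a * q.1 ^ 2 + b * q.1 ≤ eta * q.2 ∧ eta * q.2 ≤ (a * fb + b) * q.1} :=
  pump_curve_convexHull_general a b eta fb ha heta hfb
end

section
/- Let R > 0 and f̄ > 0. For every real f with f ≤ f̄, the signed-square head-loss value satisfies R·f·|f| ≤ (2√2 − 2)·R·f̄·f + (3 − 2√2)·R·f̄². Moreover, equality holds exactly at f = f̄ and at f = (1 − √2)·f̄. -/
/-!
Write `c = √2 - 1`, so that `2√2 - 2 = 2c`, `3 - 2√2 = c²` and `c² + 2c = 1`. The line is then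
the tangent to `-R f²` at `f = -c f̄`, and its gap to the curve factors on each branch:
`R (f + c f̄)²` for `f < 0`, and `R (f̄ - f)(f + c² f̄)` for `f ≥ 0`, the latter by `c² + 2c = 1`.
Both are nonnegative for `f ≤ f̄`, and they vanish exactly at `f = -c f̄` and `f = f̄` respectively.
-/

section

variable {R fb c f : ℝ}

lemma tangent_sub_neg_branch :
    2 * c * R * fb * f + c ^ 2 * R * fb ^ 2 - R * f * -f = R * (f + c * fb) ^ 2 := by
  ring

lemma tangent_sub_pos_branch (hc : c ^ 2 + 2 * c = 1) :
    2 * c * R * fb * f + c ^ 2 * R * fb ^ 2 - R * f * f = R * (fb - f) * (f + c ^ 2 * fb) := by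
  linear_combination R * fb * f * hc

lemma signedSq_le_tangent_of_neg (hR : 0 < R) (hfb : 0 ≤ fb) (hf : f < 0) :
    R * f * |f| ≤ 2 * c * R * fb * f + c ^ 2 * R * fb ^ 2 ∧
      (R * f * |f| = 2 * c * R * fb * f + c ^ 2 * R * fb ^ 2 ↔ f = fb ∨ f = -(c * fb)) := by
  have gap := tangent_sub_neg_branch (R := R) (fb := fb) (c := c) (f := f)
  rw [abs_of_neg hf]
  refine ⟨sub_nonneg.1 (gap ▸ by positivity), ?_⟩
  rw [eq_comm, ← sub_eq_zero, gap, mul_eq_zero, or_iff_right hR.ne', sq_eq_zero_iff,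
    or_iff_right (by linarith), add_eq_zero_iff_eq_neg]

lemma signedSq_le_tangent_of_nonneg (hR : 0 < R) (hfb : 0 < fb) (hc0 : 0 < c)
    (hc : c ^ 2 + 2 * c = 1) (hf0 : 0 ≤ f) (hf : f ≤ fb) :
    R * f * |f| ≤ 2 * c * R * fb * f + c ^ 2 * R * fb ^ 2 ∧
      (R * f * |f| = 2 * c * R * fb * f + c ^ 2 * R * fb ^ 2 ↔ f = fb ∨ f = -(c * fb)) := by
  have gap := tangent_sub_pos_branch (R := R) (fb := fb) (f := f) hc
  have hfactor : 0 < f + c ^ 2 * fb := by positivity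
  have hfb_sub : 0 ≤ fb - f := sub_nonneg.2 hf
  rw [abs_of_nonneg hf0]
  refine ⟨sub_nonneg.1 (gap ▸ by positivity), ?_⟩
  have hneg : f ≠ -(c * fb) := by nlinarith
  rw [eq_comm, ← sub_eq_zero, gap, mul_eq_zero, mul_eq_zero, or_iff_right hR.ne',
    or_iff_left hfactor.ne', or_iff_left hneg, sub_eq_zero, eq_comm]

end

/-- Upper edge of the quasi-convex hull of the Darcy–Weisbach curve y = R·f·|f|:
for f ≤ f̄, R·f·|f| ≤ (2√2 − 2)·R·f̄·f + (3 − 2√2)·R·f̄², with equality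
exactly at f = f̄ and f = (1 − √2)·f̄. -/
theorem darcy_upper_edge (R fb : ℝ) (hR : 0 < R) (hfb : 0 < fb) :
    ∀ f : ℝ, f ≤ fb →
      (R * f * |f| ≤ (2 * Real.sqrt 2 - 2) * R * fb * f
        + (3 - 2 * Real.sqrt 2) * R * fb ^ 2 ∧
      (R * f * |f| = (2 * Real.sqrt 2 - 2) * R * fb * f
        + (3 - 2 * Real.sqrt 2) * R * fb ^ 2 ↔
        f = fb ∨ f = (1 - Real.sqrt 2) * fb)) := by
  intro f hf
  have hsqrt : Real.sqrt 2 ^ 2 = 2 := Real.sq_sqrt zero_le_two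
  have hc0 : 0 < Real.sqrt 2 - 1 := by
    linarith [Real.one_lt_sqrt_two]
  have hc : (Real.sqrt 2 - 1) ^ 2 + 2 * (Real.sqrt 2 - 1) = 1 := by
    linear_combination hsqrt
  have hline : (2 * Real.sqrt 2 - 2) * R * fb * f + (3 - 2 * Real.sqrt 2) * R * fb ^ 2 =
      2 * (Real.sqrt 2 - 1) * R * fb * f + (Real.sqrt 2 - 1) ^ 2 * R * fb ^ 2 := by
    linear_combination -(R * fb ^ 2) * hsqrt
  rw [hline, show (1 - Real.sqrt 2) * fb = -((Real.sqrt 2 - 1) * fb) by ring]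
  rcases lt_or_ge f 0 with hneg | hnonneg
  · exact signedSq_le_tangent_of_neg hR hfb.le hneg
  · exact signedSq_le_tangent_of_nonneg hR hfb hc0 hc hnonneg hf
end

section
/- Let R > 0, f̄ > 0, and f̲ ∈ ℝ with −(1 + √2)·f̄ ≤ f̲ ≤ 0. For every f ∈ [f̲, f̄], the signed-square head-loss value satisfies R·f·|f| ≥ 2·R·f̄·f − R·f̄². -/
/-! The gap between `x * |x|` and the tangent line `2 * c * x - c ^ 2` is `(x - c) ^ 2` for
`x ≥ 0` and `2 * c ^ 2 - (x + c) ^ 2` for `x < 0`; the latter is nonnegative exactly when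
`|x + c| ≤ √2 * c`, whose lower half is the condition `-(1 + √2) * c ≤ x`. -/

open Real

theorem two_mul_mul_sub_sq_le_mul_abs_self {c x : ℝ} (hx : -(1 + √2) * c ≤ x) :
    2 * c * x - c ^ 2 ≤ x * |x| := by
  have hsqrt2 : √2 ^ 2 = 2 := sq_sqrt zero_le_two
  have hsqrt2_gt_one : 1 < √2 := by
    rw [lt_sqrt zero_le_one]
    norm_num
  rcases le_or_gt 0 x with hx0 | hx0
  · rw [abs_of_nonneg hx0]
    nlinarith [sq_nonneg (x - c)]
  · rw [abs_of_neg hx0]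
    have hc : 0 < c := by nlinarith
    have hshift : (x + c) ^ 2 ≤ (√2 * c) ^ 2 := sq_le_sq' (by linarith) (by nlinarith)
    nlinarith

theorem darcy_tangent_lower_edge_general (R fu fl : ℝ) (hR : 0 < R)
    (hfl1 : -(1 + Real.sqrt 2) * fu ≤ fl) :
    ∀ f : ℝ, fl ≤ f → f ≤ fu →
      R * f * |f| ≥ 2 * R * fu * f - R * fu ^ 2 := by
  intro f hlo _
  have hgap := mul_le_mul_of_nonneg_left
    (two_mul_mul_sub_sq_le_mul_abs_self (hfl1.trans hlo)) hR.le
  linarith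

/-- The tangent line to y = R·f² at the upper flow bound f̄ is a lower edge of the
quasi-convex hull of the Darcy–Weisbach curve y = R·f·|f| on [f̲, f̄],
provided −(1 + √2)·f̄ ≤ f̲ ≤ 0. -/
theorem darcy_tangent_lower_edge (R fu fl : ℝ) (hR : 0 < R) (hfu : 0 < fu)
    (hfl1 : -(1 + Real.sqrt 2) * fu ≤ fl) (hfl2 : fl ≤ 0) :
    ∀ f : ℝ, fl ≤ f → f ≤ fu →
      R * f * |f| ≥ 2 * R * fu * f - R * fu ^ 2 :=
  darcy_tangent_lower_edge_general R fu fl hR hfl1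
end

section
/- Let S̄ > 0, Ī > 0, and voltage bounds 0 < V̲ ≤ V̄ satisfy S̄² ≤ V̲·Ī. Then the convex hull of the set {(P,Q,V,I) ∈ ℝ⁴ : P² + Q² = V·I, P² + Q² ≤ S̄², V̲ ≤ V ≤ V̄, 0 ≤ I ≤ Ī} equals the set {(P,Q,V,I) ∈ ℝ⁴ : P² + Q² ≤ V·I, S̄²·V + V̲·V̄·I ≤ S̄²·(V̲ + V̄), P² + Q² ≤ S̄², V̲ ≤ V ≤ V̄, 0 ≤ I ≤ Ī}. -/
/-!
The relaxed set is convex: `P² + Q² ≤ V·I` with `V, I ≥ 0` is a rotated second-order cone, and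
the other constraints are a disk and half-spaces. It contains the branch set because on `[V̲, V̄]`
the hyperbola `V·I = S̄²` lies below its secant `S̄²·V + V̲·V̄·I = S̄²·(V̲ + V̄)`.

Conversely, a relaxed point with `V·I ≤ S̄²` lies on a segment in the `Q`-direction between two
points with `P² + Q² = V·I`. A relaxed point with `V·I ≥ S̄²` lies on a segment in the
`I`-direction between the hyperbola and its secant, and the point on the secant is a convex
combination of the hyperbola points over `V̲` and `V̄`. All these hyperbola points are admissible
since `S̄²/V ≤ S̄²/V̲ ≤ Ī`.
-/

open Set Convex

section Segment

variable {𝕜 E F : Type*} [Ring 𝕜] [PartialOrder 𝕜] [AddCommGroup E] [AddCommGroup F]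
  [Module 𝕜 E] [Module 𝕜 F]

theorem Prod.mk_mem_segment_left {x x₁ x₂ : E} (y : F) (h : x ∈ [x₁ -[𝕜] x₂]) :
    (x, y) ∈ [(x₁, y) -[𝕜] (x₂, y)] :=
  Prod.image_mk_segment_left (𝕜 := 𝕜) x₁ x₂ y ▸ mem_image_of_mem _ h

theorem Prod.mk_mem_segment_right (x : E) {y y₁ y₂ : F} (h : y ∈ [y₁ -[𝕜] y₂]) :
    (x, y) ∈ [(x, y₁) -[𝕜] (x, y₂)] :=
  Prod.image_mk_segment_right (𝕜 := 𝕜) x y₁ y₂ ▸ mem_image_of_mem _ h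

end Segment

theorem two_mul_add_mul_le_of_sq_add_sq_le {P₁ Q₁ V₁ I₁ P₂ Q₂ V₂ I₂ : ℝ}
    (h₁ : P₁ ^ 2 + Q₁ ^ 2 ≤ V₁ * I₁) (h₂ : P₂ ^ 2 + Q₂ ^ 2 ≤ V₂ * I₂)
    (hV₁ : 0 ≤ V₁) (hI₁ : 0 ≤ I₁) (hV₂ : 0 ≤ V₂) (hI₂ : 0 ≤ I₂) :
    2 * (P₁ * P₂ + Q₁ * Q₂) ≤ V₁ * I₂ + V₂ * I₁ := by
  refine le_of_sq_le_sq ?_ (by positivity)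
  calc (2 * (P₁ * P₂ + Q₁ * Q₂)) ^ 2
      ≤ 4 * ((P₁ ^ 2 + Q₁ ^ 2) * (P₂ ^ 2 + Q₂ ^ 2)) := by
        nlinarith [sq_nonneg (P₁ * Q₂ - P₂ * Q₁)]
    _ ≤ 4 * ((V₁ * I₁) * (V₂ * I₂)) := by gcongr
    _ ≤ (V₁ * I₂ + V₂ * I₁) ^ 2 := by nlinarith [sq_nonneg (V₁ * I₂ - V₂ * I₁)]

theorem add_sq_add_add_sq_le_mul_of_sq_add_sq_le {P₁ Q₁ V₁ I₁ P₂ Q₂ V₂ I₂ a b : ℝ}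
    (h₁ : P₁ ^ 2 + Q₁ ^ 2 ≤ V₁ * I₁) (h₂ : P₂ ^ 2 + Q₂ ^ 2 ≤ V₂ * I₂)
    (hV₁ : 0 ≤ V₁) (hI₁ : 0 ≤ I₁) (hV₂ : 0 ≤ V₂) (hI₂ : 0 ≤ I₂) (ha : 0 ≤ a) (hb : 0 ≤ b) :
    (a * P₁ + b * P₂) ^ 2 + (a * Q₁ + b * Q₂) ^ 2 ≤ (a * V₁ + b * V₂) * (a * I₁ + b * I₂) := by
  have hcross := two_mul_add_mul_le_of_sq_add_sq_le h₁ h₂ hV₁ hI₁ hV₂ hI₂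
  calc (a * P₁ + b * P₂) ^ 2 + (a * Q₁ + b * Q₂) ^ 2
      = a ^ 2 * (P₁ ^ 2 + Q₁ ^ 2) + a * b * (2 * (P₁ * P₂ + Q₁ * Q₂))
          + b ^ 2 * (P₂ ^ 2 + Q₂ ^ 2) := by ring
    _ ≤ a ^ 2 * (V₁ * I₁) + a * b * (V₁ * I₂ + V₂ * I₁) + b ^ 2 * (V₂ * I₂) := by
        have := mul_nonneg ha hb
        gcongr
    _ = (a * V₁ + b * V₂) * (a * I₁ + b * I₂) := by ring

theorem mk_secant_div_mem_segment {c Vl Vu V : ℝ} (hVl : 0 < Vl) (hV : Vl ≤ V) (hV' : V ≤ Vu) :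
    (V, c * (Vl + Vu - V) / (Vl * Vu)) ∈ [(Vl, c / Vl) -[ℝ] (Vu, c / Vu)] := by
  obtain ⟨a, b, ha, hb, hab, rfl⟩ := Icc_subset_segment (𝕜 := ℝ) ⟨hV, hV'⟩
  refine ⟨a, b, ha, hb, hab, ?_⟩
  have hVu : 0 < Vu := hVl.trans_le (hV.trans hV')
  obtain rfl : b = 1 - a := by linarith
  simp only [Prod.smul_mk, Prod.mk_add_mk, smul_eq_mul, Prod.mk.injEq, true_and]
  field_simp
  ring

namespace DistFlow

def branchSet (c Ib Vl Vu : ℝ) : Set (ℝ × ℝ × ℝ × ℝ) :=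
  {x | x.1 ^ 2 + x.2.1 ^ 2 = x.2.2.1 * x.2.2.2 ∧ x.1 ^ 2 + x.2.1 ^ 2 ≤ c ∧
    Vl ≤ x.2.2.1 ∧ x.2.2.1 ≤ Vu ∧ 0 ≤ x.2.2.2 ∧ x.2.2.2 ≤ Ib}

def relaxation (c Ib Vl Vu : ℝ) : Set (ℝ × ℝ × ℝ × ℝ) :=
  {x | x.1 ^ 2 + x.2.1 ^ 2 ≤ x.2.2.1 * x.2.2.2 ∧ c * x.2.2.1 + Vl * Vu * x.2.2.2 ≤ c * (Vl + Vu) ∧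
    x.1 ^ 2 + x.2.1 ^ 2 ≤ c ∧ Vl ≤ x.2.2.1 ∧ x.2.2.1 ≤ Vu ∧ 0 ≤ x.2.2.2 ∧ x.2.2.2 ≤ Ib}

variable {c Ib Vl Vu P Q V I : ℝ}

theorem mem_branchSet : (P, Q, V, I) ∈ branchSet c Ib Vl Vu ↔
    P ^ 2 + Q ^ 2 = V * I ∧ P ^ 2 + Q ^ 2 ≤ c ∧ Vl ≤ V ∧ V ≤ Vu ∧ 0 ≤ I ∧ I ≤ Ib :=
  Iff.rfl

theorem mem_relaxation : (P, Q, V, I) ∈ relaxation c Ib Vl Vu ↔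
    P ^ 2 + Q ^ 2 ≤ V * I ∧ c * V + Vl * Vu * I ≤ c * (Vl + Vu) ∧ P ^ 2 + Q ^ 2 ≤ c ∧
      Vl ≤ V ∧ V ≤ Vu ∧ 0 ≤ I ∧ I ≤ Ib :=
  Iff.rfl

theorem branchSet_subset_relaxation (hVl : 0 ≤ Vl) :
    branchSet c Ib Vl Vu ⊆ relaxation c Ib Vl Vu := by
  rintro ⟨P, Q, V, I⟩ h
  obtain ⟨hcone, hdisk, hV, hV', hI, hI'⟩ := mem_branchSet.1 h
  refine mem_relaxation.2 ⟨hcone.le, ?_, hdisk, hV, hV', hI, hI'⟩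
  have hVI : V * I ≤ c := hcone ▸ hdisk
  have hVlI : Vl * I ≤ c := (mul_le_mul_of_nonneg_right hV hI).trans hVI
  linear_combination
    mul_nonneg (sub_nonneg.2 hV') (sub_nonneg.2 hVlI) + mul_nonneg hVl (sub_nonneg.2 hVI)

theorem convex_relaxation (hVl : 0 ≤ Vl) : Convex ℝ (relaxation c Ib Vl Vu) := by
  rintro ⟨P₁, Q₁, V₁, I₁⟩ h₁ ⟨P₂, Q₂, V₂, I₂⟩ h₂ a b ha hb hab
  obtain ⟨hcone₁, hsec₁, hdisk₁, hV₁, hV₁', hI₁, hI₁'⟩ := mem_relaxation.1 h₁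
  obtain ⟨hcone₂, hsec₂, hdisk₂, hV₂, hV₂', hI₂, hI₂'⟩ := mem_relaxation.1 h₂
  simp only [Prod.smul_mk, Prod.mk_add_mk, smul_eq_mul, mem_relaxation]
  have hc : 0 ≤ c := (add_nonneg (sq_nonneg P₁) (sq_nonneg Q₁)).trans hdisk₁
  refine ⟨add_sq_add_add_sq_le_mul_of_sq_add_sq_le hcone₁ hcone₂ (hVl.trans hV₁) hI₁
    (hVl.trans hV₂) hI₂ ha hb, ?_, ?_, ?_, ?_, ?_, ?_⟩
  · linear_combination a * hsec₁ + b * hsec₂ + c * (Vl + Vu) * hab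
  · have h₁ : P₁ ^ 2 + Q₁ ^ 2 ≤ c * 1 := by rwa [mul_one]
    have h₂ : P₂ ^ 2 + Q₂ ^ 2 ≤ c * 1 := by rwa [mul_one]
    calc _ ≤ (a * c + b * c) * (a * 1 + b * 1) :=
          add_sq_add_add_sq_le_mul_of_sq_add_sq_le h₁ h₂ hc zero_le_one hc zero_le_one ha hb
      _ = c := by rw [← add_mul, ← add_mul, hab]; ring
  · linear_combination a * hV₁ + b * hV₂ - Vl * hab
  · linear_combination a * hV₁' + b * hV₂' + Vu * hab
  · positivity
  · linear_combination a * hI₁' + b * hI₂' + Ib * hab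

theorem mem_convexHull_branchSet_of_mul_le (hPQ : P ^ 2 + Q ^ 2 ≤ V * I) (hVI : V * I ≤ c)
    (hV : Vl ≤ V) (hV' : V ≤ Vu) (hI : 0 ≤ I) (hI' : I ≤ Ib) :
    (P, Q, V, I) ∈ convexHull ℝ (branchSet c Ib Vl Vu) := by
  set s := √(V * I - P ^ 2)
  have hs : P ^ 2 + s ^ 2 = V * I := by
    rw [Real.sq_sqrt (by linarith [sq_nonneg Q])]
    ring
  have hend : ∀ t, t ^ 2 = s ^ 2 → (P, t, V, I) ∈ branchSet c Ib Vl Vu := fun t ht =>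
    mem_branchSet.2 ⟨ht ▸ hs, (ht ▸ hs).trans_le hVI, hV, hV', hI, hI'⟩
  have hQ : Q ∈ [-s -[ℝ] s] := Icc_subset_segment (abs_le.1 (Real.abs_le_sqrt (by linarith)))
  exact segment_subset_convexHull (hend (-s) (neg_sq s)) (hend s rfl)
    (Prod.mk_mem_segment_right P (Prod.mk_mem_segment_left (V, I) hQ))

theorem mem_convexHull_branchSet_of_le_mul (hVl : 0 < Vl) (hIb : c ≤ Vl * Ib)
    (hdisk : P ^ 2 + Q ^ 2 ≤ c) (hVI : c ≤ V * I) (hsec : c * V + Vl * Vu * I ≤ c * (Vl + Vu))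
    (hV : Vl ≤ V) (hV' : V ≤ Vu) :
    (P, Q, V, I) ∈ convexHull ℝ (branchSet c Ib Vl Vu) := by
  have hc : 0 ≤ c := (add_nonneg (sq_nonneg P) (sq_nonneg Q)).trans hdisk
  have hhull := convex_convexHull ℝ (branchSet c Ib Vl Vu)
  have harc : ∀ v, Vl ≤ v → v ≤ Vu →
      (P, Q, v, c / v) ∈ convexHull ℝ (branchSet c Ib Vl Vu) := by
    intro v hv hv'
    have hvpos : 0 < v := hVl.trans_le hv
    have hvc : v * (c / v) = c := mul_div_cancel₀ c hvpos.ne'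
    refine mem_convexHull_branchSet_of_mul_le (hdisk.trans_eq hvc.symm) hvc.le hv hv'
      (by positivity) ?_
    calc c / v ≤ c / Vl := div_le_div_of_nonneg_left hc hVl hv
      _ ≤ Ib := (div_le_iff₀' hVl).2 hIb
  have hsecant :
      (P, Q, V, c * (Vl + Vu - V) / (Vl * Vu)) ∈ convexHull ℝ (branchSet c Ib Vl Vu) :=
    hhull.segment_subset (harc Vl le_rfl (hV.trans hV')) (harc Vu (hV.trans hV') le_rfl)
      (Prod.mk_mem_segment_right P (Prod.mk_mem_segment_right Q
        (mk_secant_div_mem_segment hVl hV hV')))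
  have hVu : 0 < Vu := hVl.trans_le (hV.trans hV')
  have hI : I ∈ [c / V -[ℝ] c * (Vl + Vu - V) / (Vl * Vu)] :=
    Icc_subset_segment ⟨(div_le_iff₀' (hVl.trans_le hV)).2 hVI,
      (le_div_iff₀' (mul_pos hVl hVu)).2 (by linarith)⟩
  exact hhull.segment_subset (harc V hV hV') hsecant
    (Prod.mk_mem_segment_right P (Prod.mk_mem_segment_right Q (Prod.mk_mem_segment_right V hI)))

end DistFlow

open DistFlow

theorem distflow_convexHull_general (Sb Ib Vl Vu : ℝ)
    (hVl : 0 < Vl)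
    (hcase : Sb ^ 2 ≤ Vl * Ib) :
    convexHull ℝ
      {x : ℝ × ℝ × ℝ × ℝ |
        x.1 ^ 2 + x.2.1 ^ 2 = x.2.2.1 * x.2.2.2 ∧
        x.1 ^ 2 + x.2.1 ^ 2 ≤ Sb ^ 2 ∧
        Vl ≤ x.2.2.1 ∧ x.2.2.1 ≤ Vu ∧ 0 ≤ x.2.2.2 ∧ x.2.2.2 ≤ Ib} =
      {x : ℝ × ℝ × ℝ × ℝ |
        x.1 ^ 2 + x.2.1 ^ 2 ≤ x.2.2.1 * x.2.2.2 ∧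
        Sb ^ 2 * x.2.2.1 + Vl * Vu * x.2.2.2 ≤ Sb ^ 2 * (Vl + Vu) ∧
        x.1 ^ 2 + x.2.1 ^ 2 ≤ Sb ^ 2 ∧
        Vl ≤ x.2.2.1 ∧ x.2.2.1 ≤ Vu ∧ 0 ≤ x.2.2.2 ∧ x.2.2.2 ≤ Ib} := by
  change convexHull ℝ (branchSet (Sb ^ 2) Ib Vl Vu) = relaxation (Sb ^ 2) Ib Vl Vu
  refine (convexHull_min (branchSet_subset_relaxation hVl.le)
    (convex_relaxation hVl.le)).antisymm ?_
  rintro ⟨P, Q, V, I⟩ h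
  obtain ⟨hcone, hsec, hdisk, hV, hV', hI, hI'⟩ := mem_relaxation.1 h
  rcases le_total (V * I) (Sb ^ 2) with hVI | hVI
  · exact mem_convexHull_branchSet_of_mul_le hcone hVI hV hV' hI hI'
  · exact mem_convexHull_branchSet_of_le_mul hVl hcase hdisk hVI hsec hV hV'

/-- Convex hull of the DistFlow branch constraint P² + Q² = V·I with the
apparent-power, voltage, and current bounds (case S̄² ≤ V̲·Ī). -/
theorem distflow_convexHull (Sb Ib Vl Vu : ℝ)
    (hSb : 0 < Sb) (hIb : 0 < Ib) (hVl : 0 < Vl) (hV : Vl ≤ Vu)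
    (hcase : Sb ^ 2 ≤ Vl * Ib) :
    convexHull ℝ
      {x : ℝ × ℝ × ℝ × ℝ |
        x.1 ^ 2 + x.2.1 ^ 2 = x.2.2.1 * x.2.2.2 ∧
        x.1 ^ 2 + x.2.1 ^ 2 ≤ Sb ^ 2 ∧
        Vl ≤ x.2.2.1 ∧ x.2.2.1 ≤ Vu ∧ 0 ≤ x.2.2.2 ∧ x.2.2.2 ≤ Ib} =
      {x : ℝ × ℝ × ℝ × ℝ |
        x.1 ^ 2 + x.2.1 ^ 2 ≤ x.2.2.1 * x.2.2.2 ∧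
        Sb ^ 2 * x.2.2.1 + Vl * Vu * x.2.2.2 ≤ Sb ^ 2 * (Vl + Vu) ∧
        x.1 ^ 2 + x.2.1 ^ 2 ≤ Sb ^ 2 ∧
        Vl ≤ x.2.2.1 ∧ x.2.2.1 ≤ Vu ∧ 0 ≤ x.2.2.2 ∧ x.2.2.2 ≤ Ib} :=
  distflow_convexHull_general Sb Ib Vl Vu hVl hcase
end
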